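/- For L ≥ 0, the polynomial e_L(q) equals the alternating sum over all integers j of q^{j(10j+1)} qbinom(L, ⌊L/2⌋ - 5j) - q^{(2j+1)(5j+2)} qbinom(L, ⌊(L-4)/2⌋ - 5j). -/
import Mathlib


open Finset

/-- The formal variable `q` in the field of rational functions over `ℚ`. -/
noncomputable def q : RatFunc ℚ := RatFunc.X

/-- Gaussian binomial coefficient `qbinom(N, K)` in the variable `p`;
it is `0` when `K < 0` or `K > N`. -/
noncomputable def qbin (p : RatFunc ℚ) (N K : ℤ) : RatFunc ℚ :=
  if 0 ≤ K ∧ K ≤ N then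
    (∏ j ∈ Finset.range (N - K).toNat, (1 - p ^ (K + 1 + (j : ℤ)))) /
    (∏ j ∈ Finset.range (N - K).toNat, (1 - p ^ ((j : ℤ) + 1)))
  else 0

lemma q_ne : q ≠ 0 := RatFunc.X_ne_zero

lemma qpow_ne_one (n : ℕ) : q ^ (n+1) ≠ 1 := by
  intro h
  have h2 : algebraMap (Polynomial ℚ) (RatFunc ℚ) (Polynomial.X ^ (n+1)) =
      algebraMap (Polynomial ℚ) (RatFunc ℚ) 1 := by
    rw [map_pow, map_one]
    exact h
  have h3 := RatFunc.algebraMap_injective (K := ℚ) h2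
  have := congrArg (Polynomial.eval 0) h3
  simp at this

lemma fdiv2 (a r : ℤ) (h0 : r = 0 ∨ r = 1) : (2*a + r).fdiv 2 = a := by
  rw [Int.fdiv_eq_ediv_of_nonneg _ (by norm_num)]
  omega

noncomputable def fq (n : ℕ) : RatFunc ℚ := ∏ j ∈ Finset.range n, (1 - q ^ (j+1))

lemma fq_ne (n : ℕ) : fq n ≠ 0 := by
  apply Finset.prod_ne_zero_iff.2
  intro j _
  intro h
  exact qpow_ne_one j (by linear_combination -h)

lemma fq_add (a d : ℕ) : fq (a + d) = fq a * ∏ j ∈ Finset.range d, (1 - q ^ (a + 1 + j)) := by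
  rw [fq, fq, Finset.prod_range_add]
  congr 1
  apply Finset.prod_congr rfl
  intro j _
  congr 1
  ring

lemma qbin_eq (N K : ℤ) (h0 : 0 ≤ K) (h1 : K ≤ N) :
    qbin q N K = fq N.toNat / (fq K.toNat * fq (N - K).toNat) := by
  rw [qbin, if_pos ⟨h0, h1⟩]
  have ha : N.toNat = K.toNat + (N - K).toNat := by omega
  have hnum : (∏ j ∈ Finset.range (N - K).toNat, (1 - q ^ (K + 1 + (j : ℤ)))) =
      fq N.toNat / fq K.toNat := by
    rw [ha, fq_add, mul_div_cancel_left₀ _ (fq_ne _)]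
    apply Finset.prod_congr rfl
    intro j _
    congr 1
    have : K + 1 + (j : ℤ) = ((K.toNat + 1 + j : ℕ) : ℤ) := by omega
    rw [this, zpow_natCast]
  have hden : (∏ j ∈ Finset.range (N - K).toNat, (1 - q ^ ((j : ℤ) + 1))) = fq (N - K).toNat := by
    apply Finset.prod_congr rfl
    intro j _
    congr 1
  rw [hnum, hden, div_div]

lemma qbin_vanish {N K : ℤ} (h : ¬(0 ≤ K ∧ K ≤ N)) : qbin q N K = 0 := if_neg h

lemma qpow_add (a b : ℤ) : q ^ (a + b) = q ^ a * q ^ b := zpow_add₀ q_ne a b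

lemma fq_zero : fq 0 = 1 := by simp [fq]

lemma fq_toNat_succ {n : ℤ} (h : 1 ≤ n) : fq n.toNat = fq (n-1).toNat * (1 - q ^ n) := by
  have h2 : n.toNat = (n-1).toNat + 1 := by omega
  have h3 : q ^ n = q ^ ((((n-1).toNat + 1 : ℕ)) : ℤ) := by congr 1; omega
  rw [h2, fq, Finset.prod_range_succ, ← fq, h3, zpow_natCast]

lemma one_sub_qpow_ne {n : ℤ} (h : 1 ≤ n) : 1 - q ^ n ≠ 0 := by
  have h3 : q ^ n = q ^ ((((n-1).toNat + 1 : ℕ)) : ℤ) := by congr 1; omega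
  rw [h3, zpow_natCast]
  intro hc
  exact qpow_ne_one (n-1).toNat (by linear_combination -hc)

lemma qbin_zero_right (N : ℤ) (h : 0 ≤ N) : qbin q N 0 = 1 := by
  rw [qbin_eq N 0 le_rfl h]
  have : (N - 0).toNat = N.toNat := by omega
  rw [this, show Int.toNat 0 = 0 from rfl, fq_zero, one_mul, div_self (fq_ne _)]

lemma qbin_self (N : ℤ) (h : 0 ≤ N) : qbin q N N = 1 := by
  rw [qbin_eq N N h le_rfl]
  have : (N - N).toNat = 0 := by omega
  rw [this, fq_zero, mul_one, div_self (fq_ne _)]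

lemma qbin_symm (N K : ℤ) (h : 0 ≤ N) : qbin q N K = qbin q N (N - K) := by
  by_cases hk : 0 ≤ K ∧ K ≤ N
  · rw [qbin_eq N K hk.1 hk.2, qbin_eq N (N - K) (by omega) (by omega)]
    have : N - (N - K) = K := by ring
    rw [this, mul_comm]
  · rw [qbin_vanish hk, qbin_vanish (by omega)]

lemma pascal1 (N K : ℤ) (h : 1 ≤ N) :
    qbin q N K = qbin q (N-1) (K-1) + q ^ K * qbin q (N-1) K := by
  by_cases hk : 0 ≤ K ∧ K ≤ N
  · rcases eq_or_lt_of_le hk.1 with h0 | h0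
    · rw [← h0]
      rw [qbin_zero_right N (by omega), qbin_zero_right (N-1) (by omega),
        qbin_vanish (K := 0 - 1) (by omega)]
      simp
    rcases eq_or_lt_of_le hk.2 with hN | hN
    · rw [hN, qbin_self N (by omega), qbin_self (N-1) (by omega),
        qbin_vanish (N := N-1) (K := N) (by omega)]
      simp
    -- interior: 1 ≤ K ≤ N - 1
    have e1 : qbin q N K = fq N.toNat / (fq K.toNat * fq (N-K).toNat) := qbin_eq _ _ hk.1 hk.2
    have e2 : qbin q (N-1) (K-1) = fq (N-1).toNat / (fq (K-1).toNat * fq (N-K).toNat) := by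
      rw [qbin_eq _ _ (by omega) (by omega)]
      congr 3
      omega
    have e3 : qbin q (N-1) K = fq (N-1).toNat / (fq K.toNat * fq (N-K-1).toNat) := by
      rw [qbin_eq _ _ (by omega) (by omega)]
      congr 3
      omega
    rw [e1, e2, e3, fq_toNat_succ (n := N) (by omega), fq_toNat_succ (n := K) (by omega),
      fq_toNat_succ (n := N - K) (by omega)]
    have hq : q ^ K * q ^ (N - K) = q ^ N := by rw [← qpow_add]; congr 1; ring
    have d2 := fq_ne (K-1).toNat
    have d3 := fq_ne (N-K-1).toNat
    have d4 := one_sub_qpow_ne (n := K) (by omega)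
    have d5 := one_sub_qpow_ne (n := N - K) (by omega)
    rw [← mul_div_assoc,
      div_add_div _ _ (mul_ne_zero d2 (mul_ne_zero d3 d5)) (mul_ne_zero (mul_ne_zero d2 d4) d3),
      div_eq_div_iff (mul_ne_zero (mul_ne_zero d2 d4) (mul_ne_zero d3 d5))
        (mul_ne_zero (mul_ne_zero d2 (mul_ne_zero d3 d5)) (mul_ne_zero (mul_ne_zero d2 d4) d3))]
    linear_combination (fq (N-1).toNat * fq (K-1).toNat^2 * fq (N-K-1).toNat^2 *
      (1 - q^K) * (1 - q^(N-K))) * hq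
  · rw [qbin_vanish hk, qbin_vanish (N := N-1) (K := K-1) (by omega),
      qbin_vanish (N := N-1) (K := K) (by omega)]
    simp

lemma pascal2 (N K : ℤ) (h : 1 ≤ N) :
    qbin q N K = q ^ (N - K) * qbin q (N-1) (K-1) + qbin q (N-1) K := by
  rw [qbin_symm N K (by omega), pascal1 N (N-K) h,
    qbin_symm (N-1) (K-1) (by omega), qbin_symm (N-1) K (by omega)]
  have a1 : N - K - 1 = N - 1 - K := by ring
  have a2 : N - 1 - (K-1) = N - K := by ring
  rw [a1, a2, add_comm]

noncomputable def eL (L : ℕ) : RatFunc ℚ :=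
  ∑ t ∈ Finset.range (L + 1), q ^ (t ^ 2) * qbin q ((L : ℤ) - t) t

lemma eL_zero : eL 0 = 1 := by
  simp [eL]
  rw [qbin_zero_right 0 le_rfl]

lemma eL_one : eL 1 = 1 := by
  rw [eL, Finset.sum_range_succ, Finset.sum_range_one]
  norm_num
  rw [qbin_vanish (N := (0:ℤ)) (K := (1:ℤ)) (by norm_num),
    qbin_zero_right 1 (by norm_num)]
  ring

lemma eL_rec (L : ℕ) : eL (L + 2) = eL (L + 1) + q ^ (L + 1) * eL L := by
  have hB0 : (q : RatFunc ℚ) ^ ((0:ℕ)^2) *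
      (q ^ (((L:ℤ)+2) - ((0:ℕ):ℤ) - ((0:ℕ):ℤ)) *
        qbin q (((L:ℤ)+1) - ((0:ℕ):ℤ)) (((0:ℕ):ℤ)-1)) = 0 := by
    rw [qbin_vanish (N := ((L:ℤ)+1) - ((0:ℕ):ℤ)) (K := ((0:ℕ):ℤ)-1) (by omega)]
    ring
  have hsplit : ∀ t ∈ Finset.range (L+2),
      q ^ (t^2) * qbin q (((L:ℤ)+2) - t) t =
      q ^ (t^2) * qbin q (((L:ℤ)+1) - t) t
        + q ^ (t^2) * (q ^ (((L:ℤ)+2) - t - t) * qbin q (((L:ℤ)+1) - t) ((t:ℤ)-1)) := by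
    intro t ht
    rw [pascal2 (((L:ℤ)+2) - t) t (by simp only [Finset.mem_range] at ht; omega)]
    have h1 : ((L:ℤ)+2) - t - 1 = ((L:ℤ)+1) - t := by ring
    rw [h1]
    ring
  have hstep : eL (L+2) = ∑ t ∈ Finset.range (L+2), q ^ (t^2) * qbin q (((L:ℤ)+2) - t) t := by
    rw [eL, Finset.sum_range_succ]
    have hz : q ^ ((L+2)^2) * qbin q ((↑(L+2):ℤ) - (↑(L+2):ℕ)) (↑(L+2):ℕ) = 0 := by
      rw [qbin_vanish (by push_cast; omega)]
      ring
    rw [hz, add_zero]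
    apply Finset.sum_congr rfl
    intro t _
    push_cast
    rfl
  have hterm : ∀ i ∈ Finset.range (L+1),
      q ^ ((i+1)^2) * (q ^ (((L:ℤ)+2) - (↑(i+1):ℕ) - (↑(i+1):ℕ)) *
        qbin q (((L:ℤ)+1) - (↑(i+1):ℕ)) ((↑(i+1):ℕ)-1)) =
      q ^ (L+1) * (q ^ (i^2) * qbin q ((L:ℤ) - i) i) := by
    intro i _
    have harg1 : ((L:ℤ)+1) - (↑(i+1):ℕ) = (L:ℤ) - i := by push_cast; ring
    have harg2 : ((↑(i+1):ℕ) : ℤ) - 1 = (i : ℤ) := by push_cast; ring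
    rw [harg1, harg2]
    rw [← zpow_natCast q ((i+1)^2), ← zpow_natCast q (L+1), ← zpow_natCast q (i^2),
      ← mul_assoc, ← mul_assoc, ← qpow_add, ← qpow_add]
    congr 2
    push_cast
    ring
  have g1 : ∑ t ∈ Finset.range (L+2), q ^ (t^2) * qbin q (((L:ℤ)+1) - t) t = eL (L+1) := by
    rw [eL]
    apply Finset.sum_congr (by congr 1)
    intro t _
    push_cast
    rfl
  have g2 : ∑ t ∈ Finset.range (L+2),
      q ^ (t^2) * (q ^ (((L:ℤ)+2) - t - t) * qbin q (((L:ℤ)+1) - t) ((t:ℤ)-1))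
      = q ^ (L+1) * eL L := by
    rw [Finset.sum_range_succ', hB0, add_zero, Finset.sum_congr rfl hterm, ← Finset.mul_sum, eL]
  rw [hstep, Finset.sum_congr rfl hsplit, Finset.sum_add_distrib, g1, g2]

lemma qbin_congr {N N' K K' : ℤ} (hN : N = N') (hK : K = K') :
    qbin q N K = qbin q N' K' := by rw [hN, hK]

lemma pascalA (N K c e1 e2 N' K1 K2 : ℤ) (h : 1 ≤ N) (hc1 : e1 = c) (hc2 : e2 = c + K)
    (hN : N' = N - 1) (hK1 : K1 = K - 1) (hK2 : K2 = K) :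
    q ^ c * qbin q N K = q ^ e1 * qbin q N' K1 + q ^ e2 * qbin q N' K2 := by
  rw [hc1, hc2, hN, hK1, hK2, pascal1 N K h, mul_add, ← mul_assoc, ← qpow_add]

lemma pascalB (N K c e1 e2 N' K1 K2 : ℤ) (h : 1 ≤ N) (hc1 : e1 = c + (N - K)) (hc2 : e2 = c)
    (hN : N' = N - 1) (hK1 : K1 = K - 1) (hK2 : K2 = K) :
    q ^ c * qbin q N K = q ^ e1 * qbin q N' K1 + q ^ e2 * qbin q N' K2 := by
  rw [hc1, hc2, hN, hK1, hK2, pascal2 N K h, mul_add, ← mul_assoc, ← qpow_add]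

lemma keyEven (m j : ℤ) (hm : 1 ≤ m) :
    q ^ (j*(10*j+1)) * qbin q (2*m) (m - 5*j)
      - q ^ ((2*j+1)*(5*j+2)) * qbin q (2*m) (m - 2 - 5*j)
    = (q ^ (j*(10*j+1)) * qbin q (2*m-1) (m-1-5*j)
        - q ^ ((2*j+1)*(5*j+2)) * qbin q (2*m-1) (m-3-5*j))
      + q ^ (2*m-1) * (q ^ (j*(10*j+1)) * qbin q (2*m-2) (m-1-5*j)
        - q ^ ((2*j+1)*(5*j+2)) * qbin q (2*m-2) (m-3-5*j))
      + (q ^ (10*j^2 - 4*j + m) * qbin q (2*m-2) (m - 5*j)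
        - q ^ (10*j^2 + 4*j + m) * qbin q (2*m-2) (m - 2 - 5*j)) := by
  have h1 := pascalA (2*m) (m-5*j) (j*(10*j+1)) (j*(10*j+1)) (10*j^2-4*j+m)
    (2*m-1) (m-1-5*j) (m-5*j) (by omega) rfl (by ring) (by ring) (by ring) rfl
  have h2 := pascalB (2*m-1) (m-5*j) (10*j^2-4*j+m) (10*j^2+j+2*m-1) (10*j^2-4*j+m)
    (2*m-2) (m-1-5*j) (m-5*j) (by omega) (by ring) rfl (by ring) (by ring) rfl
  have h3 := pascalA (2*m) (m-2-5*j) ((2*j+1)*(5*j+2)) ((2*j+1)*(5*j+2)) (10*j^2+4*j+m)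
    (2*m-1) (m-3-5*j) (m-2-5*j) (by omega) rfl (by ring) (by ring) (by ring) rfl
  have h4 := pascalB (2*m-1) (m-2-5*j) (10*j^2+4*j+m) (10*j^2+9*j+2*m+1) (10*j^2+4*j+m)
    (2*m-2) (m-3-5*j) (m-2-5*j) (by omega) (by ring) rfl (by ring) (by ring) rfl
  have hc : q ^ (2*m-1) * q ^ (j*(10*j+1)) = q ^ (10*j^2+j+2*m-1) := by
    rw [← qpow_add]; congr 1; ring
  have hd : q ^ (2*m-1) * q ^ ((2*j+1)*(5*j+2)) = q ^ (10*j^2+9*j+2*m+1) := by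
    rw [← qpow_add]; congr 1; ring
  linear_combination h1 + h2 - h3 - h4 - qbin q (2*m-2) (m-1-5*j) * hc
    + qbin q (2*m-2) (m-3-5*j) * hd

lemma keyOdd (m j : ℤ) (hm : 1 ≤ m) :
    q ^ (j*(10*j+1)) * qbin q (2*m+1) (m - 5*j)
      - q ^ ((2*j+1)*(5*j+2)) * qbin q (2*m+1) (m - 2 - 5*j)
    = (q ^ (j*(10*j+1)) * qbin q (2*m) (m-5*j)
        - q ^ ((2*j+1)*(5*j+2)) * qbin q (2*m) (m-2-5*j))
      + q ^ (2*m) * (q ^ (j*(10*j+1)) * qbin q (2*m-1) (m-1-5*j)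
        - q ^ ((2*j+1)*(5*j+2)) * qbin q (2*m-1) (m-3-5*j))
      + (q ^ (10*j^2 + 6*j + m + 1) * qbin q (2*m-1) (m - 2 - 5*j)
        - q ^ (10*j^2 + 14*j + m + 5) * qbin q (2*m-1) (m - 4 - 5*j)) := by
  have k1 := pascalB (2*m+1) (m-5*j) (j*(10*j+1)) (10*j^2+6*j+m+1) (j*(10*j+1))
    (2*m) (m-1-5*j) (m-5*j) (by omega) (by ring) rfl (by ring) (by ring) rfl
  have k2 := pascalA (2*m) (m-1-5*j) (10*j^2+6*j+m+1) (10*j^2+6*j+m+1) (10*j^2+j+2*m)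
    (2*m-1) (m-2-5*j) (m-1-5*j) (by omega) rfl (by ring) (by ring) (by ring) rfl
  have k3 := pascalB (2*m+1) (m-2-5*j) ((2*j+1)*(5*j+2)) (10*j^2+14*j+m+5) ((2*j+1)*(5*j+2))
    (2*m) (m-3-5*j) (m-2-5*j) (by omega) (by ring) rfl (by ring) (by ring) rfl
  have k4 := pascalA (2*m) (m-3-5*j) (10*j^2+14*j+m+5) (10*j^2+14*j+m+5) (10*j^2+9*j+2*m+2)
    (2*m-1) (m-4-5*j) (m-3-5*j) (by omega) rfl (by ring) (by ring) (by ring) rfl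
  have kc : q ^ (2*m) * q ^ (j*(10*j+1)) = q ^ (10*j^2+j+2*m) := by
    rw [← qpow_add]; congr 1; ring
  have kd : q ^ (2*m) * q ^ ((2*j+1)*(5*j+2)) = q ^ (10*j^2+9*j+2*m+2) := by
    rw [← qpow_add]; congr 1; ring
  linear_combination k1 + k2 - k3 - k4 - qbin q (2*m-1) (m-1-5*j) * kc
    + qbin q (2*m-1) (m-3-5*j) * kd

noncomputable def dt (L : ℤ) (j : ℤ) : RatFunc ℚ :=
  q ^ (j * (10 * j + 1)) * qbin q L (L.fdiv 2 - 5 * j)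
    - q ^ ((2 * j + 1) * (5 * j + 2)) * qbin q L ((L - 4).fdiv 2 - 5 * j)

lemma fdiv_bounds (a : ℤ) : 2 * (a.fdiv 2) ≤ a ∧ a ≤ 2 * (a.fdiv 2) + 1 := by
  rw [Int.fdiv_eq_ediv_of_nonneg _ (by norm_num)]
  omega

lemma dt_zero (L : ℕ) (j : ℤ) (h : j < -(L:ℤ)-1 ∨ (L:ℤ)+1 < j) : dt (L:ℤ) j = 0 := by
  have h1 := fdiv_bounds (L:ℤ)
  have h2 := fdiv_bounds ((L:ℤ)-4)
  rw [dt, qbin_vanish (N := (L:ℤ)) (K := (L:ℤ).fdiv 2 - 5*j) (by omega),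
    qbin_vanish (N := (L:ℤ)) (K := ((L:ℤ)-4).fdiv 2 - 5*j) (by omega)]
  ring

lemma sum_window {lo hi lo' hi' : ℤ} (f : ℤ → RatFunc ℚ) (hlo : lo' ≤ lo) (hhi : hi ≤ hi')
    (hz : ∀ j, (j < lo ∨ hi < j) → f j = 0) :
    ∑ j ∈ Finset.Icc lo' hi', f j = ∑ j ∈ Finset.Icc lo hi, f j := by
  apply (Finset.sum_subset (Finset.Icc_subset_Icc hlo hhi) ?_).symm
  intro j hj hnj
  apply hz
  simp only [Finset.mem_Icc] at hj hnj
  omega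

noncomputable def D (L : ℕ) : RatFunc ℚ := ∑ j ∈ Finset.Icc (-(L:ℤ)-1) ((L:ℤ)+1), dt (L:ℤ) j

lemma DW_canon (L : ℕ) {lo hi : ℤ} (h1 : lo ≤ -(L:ℤ)-1) (h2 : (L:ℤ)+1 ≤ hi) :
    ∑ j ∈ Finset.Icc lo hi, dt (L:ℤ) j = D L :=
  sum_window _ h1 h2 (dt_zero L)

lemma S_even (m M : ℤ) (hm : 1 ≤ m) :
    ∑ j ∈ Finset.Icc (-M) M,
      (q ^ (10*j^2 - 4*j + m) * qbin q (2*m-2) (m - 5*j)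
        - q ^ (10*j^2 + 4*j + m) * qbin q (2*m-2) (m - 2 - 5*j)) = 0 := by
  rw [Finset.sum_sub_distrib]
  rw [sub_eq_zero]
  apply Finset.sum_equiv (Equiv.neg ℤ)
  · intro i
    simp only [Finset.mem_Icc, Equiv.neg_apply]
    omega
  · intro i _
    simp only [Equiv.neg_apply]
    rw [qbin_symm (2*m-2) (m - 5*i) (by omega)]
    rw [qbin_congr (show (2*m-2 : ℤ) = 2*m-2 from rfl) (show 2*m-2-(m-5*i) = m - 2 - 5*(-i) by ring)]
    congr 2
    ring

lemma S_odd (m M : ℤ) (hm : 1 ≤ m) :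
    ∑ j ∈ Finset.Icc (-M-1) M,
      (q ^ (10*j^2 + 6*j + m + 1) * qbin q (2*m-1) (m - 2 - 5*j)
        - q ^ (10*j^2 + 14*j + m + 5) * qbin q (2*m-1) (m - 4 - 5*j)) = 0 := by
  rw [Finset.sum_sub_distrib]
  rw [sub_eq_zero]
  apply Finset.sum_equiv (Equiv.subLeft (-1 : ℤ))
  · intro i
    simp only [Finset.mem_Icc, Equiv.subLeft_apply]
    omega
  · intro i _
    simp only [Equiv.subLeft_apply]
    rw [qbin_symm (2*m-1) (m - 2 - 5*i) (by omega)]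
    rw [qbin_congr (show (2*m-1 : ℤ) = 2*m-1 from rfl)
      (show 2*m-1-(m-2-5*i) = m - 4 - 5*(-1-i) by ring)]
    congr 2
    ring

lemma dt_small (L : ℕ) (hL : L ≤ 1) (j : ℤ) (hj : j ≠ 0) : dt (L:ℤ) j = 0 := by
  have h1 := fdiv_bounds (L:ℤ)
  have h2 := fdiv_bounds ((L:ℤ)-4)
  rw [dt, qbin_vanish (N := (L:ℤ)) (K := (L:ℤ).fdiv 2 - 5*j) (by omega),
    qbin_vanish (N := (L:ℤ)) (K := ((L:ℤ)-4).fdiv 2 - 5*j) (by omega)]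
  ring

lemma dt_small0 (L : ℕ) (hL : L ≤ 1) : dt (L:ℤ) 0 = 1 := by
  have h1 := fdiv_bounds (L:ℤ)
  have h2 := fdiv_bounds ((L:ℤ)-4)
  have e1 : (L:ℤ).fdiv 2 - 5*0 = 0 := by omega
  rw [dt, e1, qbin_vanish (N := (L:ℤ)) (K := ((L:ℤ)-4).fdiv 2 - 5*0) (by omega),
    qbin_zero_right _ (by omega)]
  norm_num

lemma D_base (L : ℕ) (hL : L ≤ 1) : D L = 1 := by
  rw [D, Finset.sum_eq_single_of_mem (0:ℤ) (by simp only [Finset.mem_Icc]; omega)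
    (fun b _ hb => dt_small L hL b hb)]
  exact dt_small0 L hL

lemma D_rec (L : ℕ) : D (L+2) = D (L+1) + q ^ (L+1) * D L := by
  rcases Nat.even_or_odd L with ⟨k, hk⟩ | ⟨k, hk⟩
  · set m : ℤ := k + 1 with hm
    have hm1 : 1 ≤ m := by omega
    have hq2 : (q : RatFunc ℚ) ^ (2*m-1) = q ^ (L+1) := by
      rw [show 2*m-1 = ((L+1:ℕ):ℤ) by push_cast; omega, zpow_natCast]
    have c2 : ((L+2:ℕ):ℤ) = 2*m := by push_cast; omega
    have c1 : ((L+1:ℕ):ℤ) = 2*m-1 := by push_cast; omega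
    have c0 : ((L:ℕ):ℤ) = 2*m-2 := by push_cast; omega
    have f2 : ((L+2:ℕ):ℤ).fdiv 2 = m := by
      rw [c2, Int.fdiv_eq_ediv_of_nonneg _ (by norm_num)]; omega
    have f2' : (((L+2:ℕ):ℤ)-4).fdiv 2 = m-2 := by
      rw [c2, Int.fdiv_eq_ediv_of_nonneg _ (by norm_num)]; omega
    have f1 : ((L+1:ℕ):ℤ).fdiv 2 = m-1 := by
      rw [c1, Int.fdiv_eq_ediv_of_nonneg _ (by norm_num)]; omega
    have f1' : (((L+1:ℕ):ℤ)-4).fdiv 2 = m-3 := by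
      rw [c1, Int.fdiv_eq_ediv_of_nonneg _ (by norm_num)]; omega
    have f0 : ((L:ℕ):ℤ).fdiv 2 = m-1 := by
      rw [c0, Int.fdiv_eq_ediv_of_nonneg _ (by norm_num)]; omega
    have f0' : (((L:ℕ):ℤ)-4).fdiv 2 = m-3 := by
      rw [c0, Int.fdiv_eq_ediv_of_nonneg _ (by norm_num)]; omega
    have hper : ∀ j : ℤ, dt ((L+2:ℕ):ℤ) j =
        dt ((L+1:ℕ):ℤ) j + q ^ (2*m-1) * dt ((L:ℕ):ℤ) j
        + (q ^ (10*j^2 - 4*j + m) * qbin q (2*m-2) (m - 5*j)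
           - q ^ (10*j^2 + 4*j + m) * qbin q (2*m-2) (m - 2 - 5*j)) := by
      intro j
      simp only [dt]
      rw [f2, f2', f1, f1', f0, f0', c2, c1, c0]
      exact keyEven m j hm1
    calc D (L+2) = ∑ j ∈ Finset.Icc (-((L:ℤ)+3)) ((L:ℤ)+3), dt ((L+2:ℕ):ℤ) j := by
          refine (DW_canon (L+2) ?_ ?_).symm <;> push_cast <;> omega
      _ = (∑ j ∈ Finset.Icc (-((L:ℤ)+3)) ((L:ℤ)+3), dt ((L+1:ℕ):ℤ) j)
          + ((∑ j ∈ Finset.Icc (-((L:ℤ)+3)) ((L:ℤ)+3), q ^ (2*m-1) * dt ((L:ℕ):ℤ) j)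
          + (∑ j ∈ Finset.Icc (-((L:ℤ)+3)) ((L:ℤ)+3),
              (q ^ (10*j^2 - 4*j + m) * qbin q (2*m-2) (m - 5*j)
               - q ^ (10*j^2 + 4*j + m) * qbin q (2*m-2) (m - 2 - 5*j)))) := by
          rw [← Finset.sum_add_distrib, ← Finset.sum_add_distrib]
          exact Finset.sum_congr rfl (fun j _ => by rw [hper j, add_assoc])
      _ = D (L+1) + (q ^ (2*m-1) * D L + 0) := by
          rw [DW_canon (L+1) (by push_cast; omega) (by push_cast; omega),
            ← Finset.mul_sum, DW_canon L (by push_cast; omega) (by push_cast; omega),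
            S_even m ((L:ℤ)+3) hm1]
      _ = D (L+1) + q ^ (L+1) * D L := by rw [add_zero, hq2]
  · set m : ℤ := k + 1 with hm
    have hm1 : 1 ≤ m := by omega
    have hq2 : (q : RatFunc ℚ) ^ (2*m) = q ^ (L+1) := by
      rw [show (2*m : ℤ) = ((L+1:ℕ):ℤ) by push_cast; omega, zpow_natCast]
    have c2 : ((L+2:ℕ):ℤ) = 2*m+1 := by push_cast; omega
    have c1 : ((L+1:ℕ):ℤ) = 2*m := by push_cast; omega
    have c0 : ((L:ℕ):ℤ) = 2*m-1 := by push_cast; omega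
    have f2 : ((L+2:ℕ):ℤ).fdiv 2 = m := by
      rw [c2, Int.fdiv_eq_ediv_of_nonneg _ (by norm_num)]; omega
    have f2' : (((L+2:ℕ):ℤ)-4).fdiv 2 = m-2 := by
      rw [c2, Int.fdiv_eq_ediv_of_nonneg _ (by norm_num)]; omega
    have f1 : ((L+1:ℕ):ℤ).fdiv 2 = m := by
      rw [c1, Int.fdiv_eq_ediv_of_nonneg _ (by norm_num)]; omega
    have f1' : (((L+1:ℕ):ℤ)-4).fdiv 2 = m-2 := by
      rw [c1, Int.fdiv_eq_ediv_of_nonneg _ (by norm_num)]; omega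
    have f0 : ((L:ℕ):ℤ).fdiv 2 = m-1 := by
      rw [c0, Int.fdiv_eq_ediv_of_nonneg _ (by norm_num)]; omega
    have f0' : (((L:ℕ):ℤ)-4).fdiv 2 = m-3 := by
      rw [c0, Int.fdiv_eq_ediv_of_nonneg _ (by norm_num)]; omega
    have hper : ∀ j : ℤ, dt ((L+2:ℕ):ℤ) j =
        dt ((L+1:ℕ):ℤ) j + q ^ (2*m) * dt ((L:ℕ):ℤ) j
        + (q ^ (10*j^2 + 6*j + m + 1) * qbin q (2*m-1) (m - 2 - 5*j)
           - q ^ (10*j^2 + 14*j + m + 5) * qbin q (2*m-1) (m - 4 - 5*j)) := by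
      intro j
      simp only [dt]
      rw [f2, f2', f1, f1', f0, f0', c2, c1, c0]
      exact keyOdd m j hm1
    calc D (L+2) = ∑ j ∈ Finset.Icc (-((L:ℤ)+3)-1) ((L:ℤ)+3), dt ((L+2:ℕ):ℤ) j := by
          refine (DW_canon (L+2) ?_ ?_).symm <;> push_cast <;> omega
      _ = (∑ j ∈ Finset.Icc (-((L:ℤ)+3)-1) ((L:ℤ)+3), dt ((L+1:ℕ):ℤ) j)
          + ((∑ j ∈ Finset.Icc (-((L:ℤ)+3)-1) ((L:ℤ)+3), q ^ (2*m) * dt ((L:ℕ):ℤ) j)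
          + (∑ j ∈ Finset.Icc (-((L:ℤ)+3)-1) ((L:ℤ)+3),
              (q ^ (10*j^2 + 6*j + m + 1) * qbin q (2*m-1) (m - 2 - 5*j)
               - q ^ (10*j^2 + 14*j + m + 5) * qbin q (2*m-1) (m - 4 - 5*j)))) := by
          rw [← Finset.sum_add_distrib, ← Finset.sum_add_distrib]
          exact Finset.sum_congr rfl (fun j _ => by rw [hper j, add_assoc])
      _ = D (L+1) + (q ^ (2*m) * D L + 0) := by
          rw [DW_canon (L+1) (by push_cast; omega) (by push_cast; omega),
            ← Finset.mul_sum, DW_canon L (by push_cast; omega) (by push_cast; omega),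
            S_odd m ((L:ℤ)+3) hm1]
      _ = D (L+1) + q ^ (L+1) * D L := by rw [add_zero, hq2]

lemma key_eq (n : ℕ) : eL n = D n := by
  induction n using Nat.strong_induction_on with
  | _ n ih =>
    match n, ih with
    | 0, _ => rw [eL_zero, D_base 0 (by norm_num)]
    | 1, _ => rw [eL_one, D_base 1 (by norm_num)]
    | (n+2), ih => rw [eL_rec, D_rec, ih (n+1) (by omega), ih n (by omega)]


/-- For `L ≥ 0`, `e_L(q) = Σ_{t≥0} q^{t²} qbinom(L-t,t)` equals the alternating sum over
all integers `j` of `q^{j(10j+1)} qbinom(L, ⌊L/2⌋-5j) - q^{(2j+1)(5j+2)} qbinom(L, ⌊(L-4)/2⌋-5j)`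
(a `finsum` over `ℤ`, which has finite support). -/
theorem stmt3 (L : ℕ) :
    ∑ t ∈ Finset.range (L + 1), q ^ (t ^ 2) * qbin q ((L : ℤ) - t) t =
    ∑ᶠ j : ℤ,
      (q ^ (j * (10 * j + 1)) * qbin q L ((L : ℤ).fdiv 2 - 5 * j)
       - q ^ ((2 * j + 1) * (5 * j + 2)) * qbin q L (((L : ℤ) - 4).fdiv 2 - 5 * j)) := by
  have hsupp : (Function.support fun j : ℤ =>
      (q ^ (j * (10 * j + 1)) * qbin q L ((L : ℤ).fdiv 2 - 5 * j)
       - q ^ ((2 * j + 1) * (5 * j + 2)) * qbin q L (((L : ℤ) - 4).fdiv 2 - 5 * j)))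
      ⊆ ↑(Finset.Icc (-(L:ℤ)-1) ((L:ℤ)+1)) := by
    intro j hj
    simp only [Function.mem_support] at hj
    simp only [Finset.coe_Icc, Set.mem_Icc]
    by_contra hc
    apply hj
    have := dt_zero L j (by omega)
    rw [dt] at this
    exact this
  rw [finsum_eq_finset_sum_of_support_subset _ hsupp]
  exact key_eq L
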